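/- For every positive integer n, \int_0^1 \frac{e_n(t)^2}{1-t}\, dt = \frac{1}{2n}, where e_n is the identity-type polynomial. -/

import Mathlib

/-!
With `n = m + 1`, Rodrigues' formula `m! e_n = D^m [t^m (1-t)^n]` and `m` integrations by parts
give `∫₀¹ q e_n = (-1)^m q_m m! n! / (2n)!` for every polynomial `q` of degree at most `m`, where
`q_m` is its coefficient of `t^m`; the boundary terms vanish because of the zeros of
`t^m (1-t)^n` at `0` and `1`, and what remains is a beta integral. The same zero at `1` gives
`e_n(1) = 0`, so `e_n = (t - 1) g` with `deg g ≤ m` and `g_m` the leading coefficient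
`(-1)^n (2n-1)! / (m! n!)` of `e_n`. The integrand is then `-g e_n`, whose integral is
`(2n-1)! / (2n)! = 1 / (2n)`.
-/

open Polynomial MeasureTheory

/-- Falling factorial `c(c-1)⋯(c-m+1)` for real `c`. -/
noncomputable def fallFac (c : ℝ) (m : ℕ) : ℝ := ∏ i ∈ Finset.range m, (c - i)

/-- The identity-type polynomial `e_n(t) = ∑_{m=0}^n ((n)_m (-n)_m / (m!)^2) t^m`. -/
noncomputable def idPoly (n : ℕ) : Polynomial ℝ :=
  ∑ m ∈ Finset.range (n + 1),
    Polynomial.C (fallFac (n : ℝ) m * fallFac (-(n : ℝ)) m / ((Nat.factorial m : ℝ)) ^ 2) *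
      Polynomial.X ^ m

open Nat

namespace Polynomial

theorem isRoot_iterate_derivative_of_pow_dvd {R : Type*} [CommRing R] {p : R[X]} {a : R}
    {k j : ℕ} (h : (X - C a) ^ k ∣ p) (hj : j < k) : (derivative^[j] p).IsRoot a :=
  dvd_iff_isRoot.mp <| (dvd_pow_self _ (Nat.sub_ne_zero_of_lt hj)).trans
    (pow_sub_dvd_iterate_derivative_of_pow_dvd j h)

theorem iterate_derivative_of_natDegree_le {R : Type*} [CommSemiring R] {p : R[X]} {d : ℕ}
    (h : p.natDegree ≤ d) : derivative^[d] p = C ((d ! : R) * p.coeff d) := by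
  rw [eq_C_of_natDegree_le_zero ((natDegree_iterate_derivative p d).trans (by omega)),
    coeff_iterate_derivative, zero_add, descFactorial_self, nsmul_eq_mul]

theorem coeff_X_sub_C_mul_succ {R : Type*} [CommRing R] {g : R[X]} {d : ℕ}
    (hg : g.natDegree ≤ d) (a : R) : ((X - C a) * g).coeff (d + 1) = g.coeff d := by
  rw [sub_mul, coeff_sub, coeff_X_mul, coeff_C_mul,
    coeff_eq_zero_of_natDegree_lt (Nat.lt_succ_of_le hg), mul_zero, sub_zero]

theorem X_sub_one_pow_dvd_X_pow_mul_one_sub_X_pow {R : Type*} [CommRing R] (m k : ℕ) :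
    (X - C (1 : R)) ^ k ∣ X ^ m * (1 - X) ^ k :=
  ⟨(-1) ^ k * X ^ m, by rw [map_one, show (1 - X : R[X]) = -(X - 1) by ring, neg_pow]; ring⟩

theorem integral_eval_mul_iterate_derivative {a b : ℝ} {h : ℝ[X]} {k : ℕ}
    (hvan : ∀ j < k, (derivative^[j] h).IsRoot a ∧ (derivative^[j] h).IsRoot b) (g : ℝ[X]) :
    ∫ t in a..b, g.eval t * (derivative^[k] h).eval t
      = (-1) ^ k * ∫ t in a..b, (derivative^[k] g).eval t * h.eval t := by
  induction k generalizing g with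
  | zero => simp
  | succ k ih =>
    have hparts := intervalIntegral.integral_mul_deriv_eq_deriv_mul
      (fun t _ => g.hasDerivAt t)
      (fun t _ => by
        simpa only [Function.iterate_succ_apply'] using (derivative^[k] h).hasDerivAt t)
      ((derivative g).continuous.intervalIntegrable a b)
      ((derivative^[k + 1] h).continuous.intervalIntegrable a b)
    obtain ⟨hva, hvb⟩ := hvan k k.lt_succ_self
    rw [hva.eq_zero, hvb.eq_zero, mul_zero, mul_zero, sub_zero, zero_sub] at hparts
    rw [hparts, ih (fun j hj => hvan j (by omega)), ← Function.iterate_succ_apply]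
    ring

end Polynomial

theorem integral_pow_mul_one_sub_pow (a b : ℕ) :
    ∫ t in (0:ℝ)..1, t ^ a * (1 - t) ^ b = (a ! * b ! : ℝ) / (a + b + 1)! := by
  induction b generalizing a with
  | zero =>
    simp [factorial_succ, field]
  | succ b ih =>
    have hsplit (t : ℝ) :
        t ^ a * (1 - t) ^ (b + 1) = t ^ a * (1 - t) ^ b - t ^ (a + 1) * (1 - t) ^ b := by ring
    simp_rw [hsplit]
    rw [intervalIntegral.integral_sub (by apply Continuous.intervalIntegrable; fun_prop)
      (by apply Continuous.intervalIntegrable; fun_prop), ih, ih,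
      show a + 1 + b + 1 = a + (b + 1) + 1 by ring]
    simp only [factorial_succ, Nat.add_succ]
    push_cast
    field_simp
    ring

theorem Nat.choose_mul_factorial_mul_factorial_mul_descFactorial (m k : ℕ) :
    (m + 1).choose k * (k ! * k !) * (m + k).descFactorial m
      = m ! * ((m + 1).descFactorial k * (m + 1).ascFactorial k) := by
  have hdesc : k ! * (m + k).descFactorial m = (m + k)! := by
    simpa [show m + k - m = k by omega] using factorial_mul_descFactorial (m.le_add_right k)
  calc (m + 1).choose k * (k ! * k !) * (m + k).descFactorial m
      = (k ! * (m + 1).choose k) * (k ! * (m + k).descFactorial m) := by ring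
    _ = (m + 1).descFactorial k * (m ! * (m + 1).ascFactorial k) := by
      rw [hdesc, factorial_mul_ascFactorial, descFactorial_eq_factorial_mul_choose]
    _ = _ := by ring

theorem fallFac_natCast {n m : ℕ} (h : m ≤ n) : fallFac n m = n.descFactorial m := by
  induction m with
  | zero => simp [fallFac]
  | succ k ih =>
    rw [fallFac, Finset.prod_range_succ, ← fallFac, ih (le_of_succ_le h),
      descFactorial_succ, cast_mul, cast_sub (le_of_succ_le h)]
    ring

theorem fallFac_neg_natCast (n m : ℕ) : fallFac (-n) m = (-1) ^ m * n.ascFactorial m := by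
  induction m with
  | zero => simp [fallFac]
  | succ k ih =>
    rw [fallFac, Finset.prod_range_succ, ← fallFac, ih, ascFactorial_succ]
    push_cast
    ring

theorem natDegree_idPoly_le (n : ℕ) : (idPoly n).natDegree ≤ n :=
  natDegree_sum_le_of_forall_le _ _ fun k hk =>
    (natDegree_C_mul_le _ _).trans ((natDegree_X_pow_le k).trans (Finset.mem_range_succ_iff.1 hk))

theorem coeff_idPoly_self (m : ℕ) :
    (idPoly (m + 1)).coeff (m + 1) = (-1) ^ (m + 1) * (2 * m + 1)! / (m ! * (m + 1)!) := by
  have hasc : m ! * (m + 1).ascFactorial (m + 1) = (2 * m + 1)! := by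
    rw [factorial_mul_ascFactorial, two_mul, add_assoc]
  rw [idPoly, finsetSum_coeff, Finset.sum_eq_single_of_mem (m + 1) (Finset.self_mem_range_succ _)
    fun k _ hk => by rw [coeff_C_mul_X_pow, if_neg hk.symm], coeff_C_mul_X_pow, if_pos rfl,
    fallFac_natCast le_rfl, fallFac_neg_natCast, descFactorial_self, ← hasc]
  push_cast
  field_simp

theorem iterate_derivative_X_pow_mul_one_sub_X_pow (m : ℕ) :
    derivative^[m] (X ^ m * (1 - X) ^ (m + 1) : ℝ[X]) = C (m ! : ℝ) * idPoly (m + 1) := by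
  have hexpand : (X ^ m * (1 - X) ^ (m + 1) : ℝ[X])
      = ∑ k ∈ Finset.range (m + 2), C ((-1) ^ k * ((m + 1).choose k : ℝ)) * X ^ (m + k) := by
    rw [sub_eq_add_neg, add_comm, add_pow, Finset.mul_sum]
    refine Finset.sum_congr rfl fun k _ => ?_
    rw [one_pow, mul_one, map_mul, map_pow, map_neg, map_one, C_eq_natCast, neg_pow, pow_add]
    ring
  rw [hexpand, iterate_derivative_sum, idPoly, Finset.mul_sum]
  refine Finset.sum_congr rfl fun k hk => ?_
  rw [iterate_derivative_C_mul, iterate_derivative_X_pow_eq_C_mul, show m + k - m = k by omega,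
    ← mul_assoc, ← mul_assoc, ← map_mul, ← map_mul,
    fallFac_natCast (Finset.mem_range_succ_iff.1 hk), fallFac_neg_natCast]
  congr 2
  have h := congrArg (Nat.cast : ℕ → ℝ) (choose_mul_factorial_mul_factorial_mul_descFactorial m k)
  push_cast at h
  field_simp
  linear_combination h

theorem isRoot_idPoly_succ_one (m : ℕ) : (idPoly (m + 1)).IsRoot 1 := by
  have h := isRoot_iterate_derivative_of_pow_dvd
    (X_sub_one_pow_dvd_X_pow_mul_one_sub_X_pow (R := ℝ) m (m + 1)) m.lt_succ_self
  rw [iterate_derivative_X_pow_mul_one_sub_X_pow, IsRoot, eval_mul, eval_C] at h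
  exact (mul_eq_zero.1 h).resolve_left (by positivity)

theorem integral_eval_mul_idPoly {q : ℝ[X]} {m : ℕ} (hq : q.natDegree ≤ m) :
    ∫ t in (0:ℝ)..1, q.eval t * (idPoly (m + 1)).eval t
      = (-1) ^ m * q.coeff m * (m ! * (m + 1)! / (2 * m + 2)!) := by
  have hvan : ∀ j < m, (derivative^[j] (X ^ m * (1 - X) ^ (m + 1) : ℝ[X])).IsRoot 0 ∧
      (derivative^[j] (X ^ m * (1 - X) ^ (m + 1) : ℝ[X])).IsRoot 1 := fun j hj =>
    ⟨isRoot_iterate_derivative_of_pow_dvd (by simp) hj,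
      isRoot_iterate_derivative_of_pow_dvd (X_sub_one_pow_dvd_X_pow_mul_one_sub_X_pow m (m + 1))
        (by omega)⟩
  have hparts := integral_eval_mul_iterate_derivative hvan q
  simp only [iterate_derivative_X_pow_mul_one_sub_X_pow, iterate_derivative_of_natDegree_le hq,
    eval_mul, eval_C, eval_pow, eval_sub, eval_one, eval_X, intervalIntegral.integral_const_mul,
    mul_left_comm _ (m ! : ℝ)] at hparts
  rw [integral_pow_mul_one_sub_pow, show m + (m + 1) + 1 = 2 * m + 2 by ring] at hparts
  exact mul_left_cancel₀ (by positivity) (hparts.trans (by ring))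

theorem idPoly_norm (n : ℕ) (hn : 0 < n) :
    ∫ t in (0:ℝ)..1, ((idPoly n).eval t) ^ 2 / (1 - t) = 1 / (2 * (n : ℝ)) := by
  obtain ⟨m, rfl⟩ := exists_eq_add_one_of_ne_zero hn.ne'
  have hdeg := natDegree_idPoly_le (m + 1)
  set g := idPoly (m + 1) /ₘ (X - C 1)
  have hfactor : (X - C 1) * g = idPoly (m + 1) :=
    mul_divByMonic_eq_iff_isRoot.2 (isRoot_idPoly_succ_one m)
  have hg : g.natDegree ≤ m := by
    rw [natDegree_divByMonic _ (monic_X_sub_C 1), natDegree_X_sub_C]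
    omega
  have hlead : g.coeff m = (idPoly (m + 1)).coeff (m + 1) := by
    rw [← hfactor, coeff_X_sub_C_mul_succ hg]
  have hintegrand (t : ℝ) :
      (idPoly (m + 1)).eval t ^ 2 / (1 - t) = -(g.eval t * (idPoly (m + 1)).eval t) := by
    rw [← hfactor, eval_mul, eval_sub, eval_X, eval_C]
    rcases eq_or_ne t 1 with rfl | ht
    · simp
    · field_simp [sub_ne_zero.2 ht.symm]
      ring
  have hsign : (-1 : ℝ) ^ m * (-1) ^ (m + 1) = -1 := by
    rw [← pow_add, Odd.neg_one_pow ⟨m, by ring⟩]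
  simp_rw [hintegrand]
  rw [intervalIntegral.integral_neg, integral_eval_mul_idPoly hg, hlead, coeff_idPoly_self,
    show 2 * m + 2 = 2 * m + 1 + 1 by ring, factorial_succ (2 * m + 1)]
  push_cast
  field_simp
  rw [hsign]
  ring
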